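/- arXiv:1209.2581 — 2 statements merged into one kernel-verified Lean document; each statement's English description precedes it below -/
import Mathlib

section
/- The map φ sending σ = (σ(1),...,σ(d+1)) ∈ S_{d+1}^l to (d+2-σ(l), ..., d+2-σ(1), d+2-σ(l+1), ..., d+2-σ(d+1)) is a bijection from the set of σ ∈ S_{d+1}^l with des^l(σ) = i and σ(d+1) = d+1-j onto the set of τ ∈ S_{d+1}^l with des^l(τ) = d-i and τ(d+1) = j+1. -/
/-- The set `S_n^l` of permutations of `Fin n` whose first `l` values
(1-indexed positions `1,…,l`) are strictly decreasing. -/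
def SdSet (n l : ℕ) : Set (Equiv.Perm (Fin n)) :=
  {σ | ∀ s t : Fin n, s < t → (t : ℕ) < l → σ t < σ s}

/-- `pv n σ m` is the 1-indexed value `σ(m+1)` of the permutation at the
0-indexed position `m` (and `0` if `m` is out of range). -/
def pv (n : ℕ) (σ : Equiv.Perm (Fin n)) (m : ℕ) : ℕ :=
  if h : m < n then (σ ⟨m, h⟩ : ℕ) + 1 else 0

/-- The `l`-descent set of `σ`, in 0-indexed positions: `m` (0-indexed,
corresponding to the 1-indexed position `m+1 ∈ [n-1]`) is an `l`-descent if
either `m+1 ∈ [l]` and `σ(m+1) > σ(l+1)`, or `m+1 ∈ [n-1]∖[l]` and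
`σ(m+1) > σ(m+2)`. -/
def lDesc (n l : ℕ) (σ : Equiv.Perm (Fin n)) : Finset ℕ :=
  (Finset.range (n - 1)).filter fun m =>
    (m < l ∧ pv n σ l < pv n σ m) ∨ (l ≤ m ∧ pv n σ (m + 1) < pv n σ m)

/-- `Acard n i k l` is the number of permutations `σ ∈ S_n^l` with exactly `i`
`l`-descents and last (1-indexed) value `σ(n) = k`. -/
noncomputable def Acard (n i k l : ℕ) : ℕ :=
  Nat.card {σ : Equiv.Perm (Fin n) //
    σ ∈ SdSet n l ∧ (lDesc n l σ).card = i ∧ pv n σ (n - 1) = k}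

/-- The position permutation reversing the first `l` (0-indexed: `0,…,l-1`)
positions. -/
def flipPos (n l : ℕ) : Equiv.Perm (Fin n) :=
  Function.Involutive.toPerm
    (fun p => if h : (p : ℕ) < l ∧ l ≤ n then ⟨l - 1 - (p : ℕ), by omega⟩ else p)
    (fun p => by
      dsimp only
      by_cases h : (p : ℕ) < l ∧ l ≤ n
      · rw [dif_pos h]
        have h2 : ((⟨l - 1 - (p : ℕ), by omega⟩ : Fin n) : ℕ) < l ∧ l ≤ n :=
          ⟨by simp; omega, h.2⟩
        rw [dif_pos h2]
        exact Fin.ext (by simp; omega)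
      · rw [dif_neg h, dif_neg h])

/-- The map `φ` sending `σ ∈ S_{d+1}^l` to
`(d+2-σ(l), …, d+2-σ(1), d+2-σ(l+1), …, d+2-σ(d+1))` (in 1-indexed terms). -/
def phiPerm (d l : ℕ) (σ : Equiv.Perm (Fin (d + 1))) : Equiv.Perm (Fin (d + 1)) :=
  ((flipPos (d + 1) l).trans σ).trans Fin.revPerm

section Aux

lemma pv_eq {n : ℕ} (σ : Equiv.Perm (Fin n)) (m : ℕ) (h : m < n) :
    pv n σ m = (σ ⟨m, h⟩ : ℕ) + 1 := dif_pos h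

lemma flipPos_apply {n l : ℕ} (p : Fin n) :
    flipPos n l p =
      if h : (p : ℕ) < l ∧ l ≤ n then (⟨l - 1 - (p : ℕ), by omega⟩ : Fin n) else p := rfl

lemma flipPos_lt {n l m : ℕ} (hm : m < l) (hl : l ≤ n) (h : m < n) :
    flipPos n l ⟨m, h⟩ = ⟨l - 1 - m, by omega⟩ := by
  rw [flipPos_apply, dif_pos ⟨hm, hl⟩]

lemma flipPos_ge {n l m : ℕ} (hm : l ≤ m) (h : m < n) :
    flipPos n l ⟨m, h⟩ = ⟨m, h⟩ := by
  rw [flipPos_apply, dif_neg]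
  simp only [not_and]
  intro h'
  omega

lemma phiPerm_val (d l : ℕ) (σ : Equiv.Perm (Fin (d + 1))) (p : Fin (d + 1)) :
    (phiPerm d l σ p : ℕ) = d - (σ (flipPos (d + 1) l p) : ℕ) := by
  simp [phiPerm, Fin.rev]

lemma phiPerm_involutive (d l : ℕ) (σ : Equiv.Perm (Fin (d + 1))) :
    phiPerm d l (phiPerm d l σ) = σ := by
  ext p
  have hf : ∀ q : Fin (d + 1), flipPos (d + 1) l (flipPos (d + 1) l q) = q := by
    intro q
    by_cases h : (q : ℕ) < l ∧ l ≤ d + 1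
    · have h1 : flipPos (d + 1) l q = ⟨l - 1 - (q : ℕ), by omega⟩ := by
        rw [flipPos_apply, dif_pos h]
      rw [h1, flipPos_lt (by omega) h.2 (by omega)]
      exact Fin.ext (by simp; omega)
    · have h1 : flipPos (d + 1) l q = q := by rw [flipPos_apply, dif_neg h]
      rw [h1, h1]
  simp only [phiPerm, Equiv.trans_apply, Fin.revPerm_apply]
  rw [hf, Fin.rev_rev]

lemma lDesc_card_le (n l : ℕ) (σ : Equiv.Perm (Fin n)) :
    (lDesc n l σ).card ≤ n - 1 := by
  calc (lDesc n l σ).card ≤ (Finset.range (n - 1)).card :=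
        Finset.card_le_card (Finset.filter_subset _ _)
    _ = n - 1 := Finset.card_range _

lemma phi_key (d l : ℕ) (hl : 1 ≤ l) (hld : l ≤ d)
    (σ : Equiv.Perm (Fin (d + 1))) (hσ : σ ∈ SdSet (d + 1) l) :
    phiPerm d l σ ∈ SdSet (d + 1) l ∧
    (lDesc (d + 1) l (phiPerm d l σ)).card = d - (lDesc (d + 1) l σ).card ∧
    pv (d + 1) (phiPerm d l σ) d = d + 2 - pv (d + 1) σ d := by
  set τ := phiPerm d l σ with hτ
  have hvle : ∀ p : Fin (d + 1), (σ p : ℕ) ≤ d := fun p => by omega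
  have hne : ∀ p q : Fin (d + 1), p ≠ q → (σ p : ℕ) ≠ (σ q : ℕ) := by
    intro p q hpq h
    exact hpq (σ.injective (Fin.ext h))
  refine ⟨?_, ?_, ?_⟩
  · -- τ ∈ SdSet
    intro s t hst htl
    have hs : (s : ℕ) < d + 1 := s.isLt
    have ht : (t : ℕ) < d + 1 := t.isLt
    have hstn : (s : ℕ) < (t : ℕ) := hst
    have hfs : flipPos (d + 1) l s = ⟨l - 1 - (s : ℕ), by omega⟩ := by
      rw [← flipPos_lt (by omega) (by omega) hs]
    have hft : flipPos (d + 1) l t = ⟨l - 1 - (t : ℕ), by omega⟩ := by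
      rw [← flipPos_lt htl (by omega) ht]
    have key : σ ⟨l - 1 - (s : ℕ), by omega⟩ < σ ⟨l - 1 - (t : ℕ), by omega⟩ := by
      apply hσ
      · show l - 1 - (t : ℕ) < l - 1 - (s : ℕ); omega
      · show l - 1 - (s : ℕ) < l; omega
    have : (σ ⟨l - 1 - (s : ℕ), by omega⟩ : ℕ) < σ ⟨l - 1 - (t : ℕ), by omega⟩ := key
    show τ t < τ s
    rw [Fin.lt_def]
    rw [hτ, phiPerm_val, phiPerm_val, hfs, hft]
    have h1 := hvle ⟨l - 1 - (s : ℕ), by omega⟩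
    have h2 := hvle ⟨l - 1 - (t : ℕ), by omega⟩
    omega
  · -- descent count
    set g : ℕ → ℕ := fun m => if m < l then l - 1 - m else m with hg
    have hginv : ∀ m, g (g m) = m := by
      intro m
      simp only [hg]
      by_cases h : m < l
      · rw [if_pos h, if_pos (by omega), ]
        omega
      · rw [if_neg h, if_neg h]
    have main : ∀ m, m < d → (m ∈ lDesc (d + 1) l τ ↔ g m ∉ lDesc (d + 1) l σ) := by
      intro m hm
      have hld1 : l < d + 1 := by omega
      have hm1 : m < d + 1 := by omega
      have hm2 : m + 1 < d + 1 := by omega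
      simp only [lDesc, Finset.mem_filter, Finset.mem_range]
      by_cases hml : m < l
      · have hgm : g m = l - 1 - m := if_pos hml
        have hgm1 : l - 1 - m < d + 1 := by omega
        have hτm : pv (d + 1) τ m = d - (σ ⟨l - 1 - m, hgm1⟩ : ℕ) + 1 := by
          rw [pv_eq _ _ hm1, hτ, phiPerm_val, flipPos_lt hml (by omega) hm1]
        have hτl : pv (d + 1) τ l = d - (σ ⟨l, hld1⟩ : ℕ) + 1 := by
          rw [pv_eq _ _ hld1, hτ, phiPerm_val, flipPos_ge le_rfl hld1]
        have hσm' : pv (d + 1) σ (l - 1 - m) = (σ ⟨l - 1 - m, hgm1⟩ : ℕ) + 1 :=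
          pv_eq _ _ hgm1
        have hσl : pv (d + 1) σ l = (σ ⟨l, hld1⟩ : ℕ) + 1 := pv_eq _ _ hld1
        have hne1 : (σ ⟨l - 1 - m, hgm1⟩ : ℕ) ≠ (σ ⟨l, hld1⟩ : ℕ) := by
          apply hne
          intro h
          have := Fin.mk.injEq (l - 1 - m) hgm1 l hld1 ▸ congrArg Fin.val h
          simp at h
          omega
        have h1 := hvle ⟨l - 1 - m, hgm1⟩
        have h2 := hvle ⟨l, hld1⟩
        rw [hgm, hτm, hτl, hσm', hσl]
        simp only [add_tsub_cancel_right]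
        omega
      · have hgm : g m = m := if_neg hml
        have hτm : pv (d + 1) τ m = d - (σ ⟨m, hm1⟩ : ℕ) + 1 := by
          rw [pv_eq _ _ hm1, hτ, phiPerm_val, flipPos_ge (by omega) hm1]
        have hτm1 : pv (d + 1) τ (m + 1) = d - (σ ⟨m + 1, hm2⟩ : ℕ) + 1 := by
          rw [pv_eq _ _ hm2, hτ, phiPerm_val, flipPos_ge (by omega) hm2]
        have hσm : pv (d + 1) σ m = (σ ⟨m, hm1⟩ : ℕ) + 1 := pv_eq _ _ hm1
        have hσm1 : pv (d + 1) σ (m + 1) = (σ ⟨m + 1, hm2⟩ : ℕ) + 1 := pv_eq _ _ hm2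
        have hne1 : (σ ⟨m, hm1⟩ : ℕ) ≠ (σ ⟨m + 1, hm2⟩ : ℕ) := by
          apply hne
          intro h
          have := congrArg Fin.val h
          simp at this
        have h1 := hvle ⟨m, hm1⟩
        have h2 := hvle ⟨m + 1, hm2⟩
        rw [hgm, hτm, hτm1, hσm, hσm1]
        omega
    have hsub : lDesc (d + 1) l σ ⊆ Finset.range d := by
      intro m hm
      simp only [lDesc, Finset.mem_filter, Finset.mem_range] at hm ⊢
      omega
    have hcard : (lDesc (d + 1) l τ).card = (Finset.range d \ lDesc (d + 1) l σ).card := by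
      apply Finset.card_bij' (fun m _ => g m) (fun m _ => g m)
      · intro m hm
        have hmr : m < d := by
          have h1 := Finset.mem_filter.mp hm
          have h2 := Finset.mem_range.mp h1.1
          omega
        have hgr : g m < d := by
          simp only [hg]; split <;> omega
        rw [Finset.mem_sdiff, Finset.mem_range]
        exact ⟨hgr, (main m hmr).mp hm⟩
      · intro m hm
        rw [Finset.mem_sdiff, Finset.mem_range] at hm
        have hgr : g m < d := by
          simp only [hg]; split <;> omega
        rw [main (g m) hgr, hginv]
        exact hm.2
      · intro m _; exact hginv m
      · intro m _; exact hginv m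
    rw [hcard, Finset.card_sdiff_of_subset hsub, Finset.card_range]
  · -- last value
    have hd1 : d < d + 1 := by omega
    have hτd : pv (d + 1) τ d = d - (σ ⟨d, hd1⟩ : ℕ) + 1 := by
      rw [pv_eq _ _ hd1, hτ, phiPerm_val, flipPos_ge (by omega) hd1]
    have hσd : pv (d + 1) σ d = (σ ⟨d, hd1⟩ : ℕ) + 1 := pv_eq _ _ hd1
    have := hvle ⟨d, hd1⟩
    rw [hτd, hσd]
    omega

end Aux

/-- The map `φ` sending `σ ∈ S_{d+1}^l` to
`(d+2-σ(l), …, d+2-σ(1), d+2-σ(l+1), …, d+2-σ(d+1))` restricts to a bijection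
from `{σ ∈ S_{d+1}^l : des^l(σ) = i, σ(d+1) = d+1-j}` onto
`{τ ∈ S_{d+1}^l : des^l(τ) = d-i, τ(d+1) = j+1}`. -/
theorem phiPerm_bijection (d l i j : ℕ) (hl : 1 ≤ l) (hld : l ≤ d)
    (hi : i ≤ d) (hj : j ≤ d) :
    ∃ e : {σ : Equiv.Perm (Fin (d + 1)) // σ ∈ SdSet (d + 1) l ∧
            (lDesc (d + 1) l σ).card = i ∧ pv (d + 1) σ d = d + 1 - j} ≃
          {τ : Equiv.Perm (Fin (d + 1)) // τ ∈ SdSet (d + 1) l ∧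
            (lDesc (d + 1) l τ).card = d - i ∧ pv (d + 1) τ d = j + 1},
      ∀ σ, ((e σ) : Equiv.Perm (Fin (d + 1))) = phiPerm d l (σ : Equiv.Perm (Fin (d + 1))) := by
  refine ⟨{ toFun := fun σ => ⟨phiPerm d l σ.1, ?_⟩
            invFun := fun τ => ⟨phiPerm d l τ.1, ?_⟩
            left_inv := ?_, right_inv := ?_ }, fun σ => rfl⟩
  · obtain ⟨σ, hσ, hc, hp⟩ := σ
    obtain ⟨h1, h2, h3⟩ := phi_key d l hl hld σ hσ
    exact ⟨h1, by rw [h2, hc], by rw [h3, hp]; omega⟩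
  · obtain ⟨τ, hτ, hc, hp⟩ := τ
    obtain ⟨h1, h2, h3⟩ := phi_key d l hl hld τ hτ
    exact ⟨h1, by rw [h2, hc]; omega, by rw [h3, hp]; omega⟩
  · intro σ
    exact Subtype.ext (phiPerm_involutive d l σ.1)
  · intro τ
    exact Subtype.ext (phiPerm_involutive d l τ.1)
end

section
/- For 0 ≤ i,j ≤ d and 1 ≤ l ≤ d-1, A(d+1, i, d+1-j, l+1) ≤ A(d+1, i, d+1-j, l). -/
def cycTo (n p q : ℕ) (x : Fin n) : Fin n :=
  if h : (x:ℕ) = q ∧ p ≤ q then ⟨p, by have := x.2; omega⟩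
  else if h2 : p ≤ (x:ℕ) ∧ (x:ℕ) < q ∧ q < n then ⟨(x:ℕ)+1, by omega⟩ else x

def cycInv (n p q : ℕ) (x : Fin n) : Fin n :=
  if h : (x:ℕ) = p ∧ p ≤ q ∧ q < n then ⟨q, h.2.2⟩
  else if h2 : p < (x:ℕ) ∧ (x:ℕ) ≤ q ∧ q < n then ⟨(x:ℕ)-1, by have := x.2; omega⟩ else x

lemma val_cycTo (n p q : ℕ) (x : Fin n) : (cycTo n p q x : ℕ) =
    if (x:ℕ) = q ∧ p ≤ q then p
    else if p ≤ (x:ℕ) ∧ (x:ℕ) < q ∧ q < n then (x:ℕ)+1 else x := by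
  unfold cycTo; split_ifs <;> rfl

lemma val_cycInv (n p q : ℕ) (x : Fin n) : (cycInv n p q x : ℕ) =
    if (x:ℕ) = p ∧ p ≤ q ∧ q < n then q
    else if p < (x:ℕ) ∧ (x:ℕ) ≤ q ∧ q < n then (x:ℕ)-1 else x := by
  unfold cycInv; split_ifs <;> rfl

def cyc (n p q : ℕ) : Equiv.Perm (Fin n) where
  toFun := cycTo n p q
  invFun := cycInv n p q
  left_inv := by
    intro x
    apply Fin.ext
    rw [val_cycInv, val_cycTo]
    have := x.2
    split_ifs <;> omega
  right_inv := by
    intro x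
    apply Fin.ext
    rw [val_cycTo, val_cycInv]
    have := x.2
    split_ifs <;> omega

lemma cyc_apply (n p q : ℕ) (hpq : p ≤ q) (hq : q < n) (x : Fin n) :
    ((cyc n p q x : Fin n) : ℕ)
      = if (x:ℕ) = q then p else if p ≤ (x:ℕ) ∧ (x:ℕ) < q then (x:ℕ)+1 else x := by
  show ((cycTo n p q x : Fin n) : ℕ) = _
  rw [val_cycTo]
  have := x.2
  split_ifs <;> omega

lemma pv_val (n : ℕ) (σ : Equiv.Perm (Fin n)) (x : Fin n) :
    pv n σ (x : ℕ) = (σ x : ℕ) + 1 := by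
  simp [pv, x.isLt]

lemma pv_lt_iff (n : ℕ) (σ : Equiv.Perm (Fin n)) (m1 m2 : ℕ) (h1 : m1 < n) (h2 : m2 < n) :
    pv n σ m1 < pv n σ m2 ↔ (σ ⟨m1, h1⟩ : ℕ) < σ ⟨m2, h2⟩ := by
  simp [pv, h1, h2]

lemma pv_inj (n : ℕ) (σ : Equiv.Perm (Fin n)) (m1 m2 : ℕ) (h1 : m1 < n) (h2 : m2 < n)
    (h : pv n σ m1 = pv n σ m2) : m1 = m2 := by
  simp only [pv, h1, h2, dif_pos, Nat.add_right_cancel_iff] at h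
  have := σ.injective (Fin.ext h)
  exact congrArg Fin.val (by exact_mod_cast this)

/-- decreasingness of `σ'` on positions `0..l` (for `σ' ∈ SdSet n (l+1)`),
stated for `pv`. -/
lemma pv_mono (n l : ℕ) (σ' : Equiv.Perm (Fin n)) (hσ' : σ' ∈ SdSet n (l+1))
    (m1 m2 : ℕ) (h12 : m1 < m2) (h2 : m2 ≤ l) (hn : m2 < n) :
    pv n σ' m2 < pv n σ' m1 := by
  have h1 : m1 < n := by omega
  rw [pv_lt_iff n σ' m2 m1 hn h1]
  exact hσ' ⟨m1, h1⟩ ⟨m2, hn⟩ (by simp [Fin.lt_def]; omega) (by simp; omega)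

def Fset (n l : ℕ) (σ' : Equiv.Perm (Fin n)) : Finset ℕ :=
  (Finset.range (l+1)).filter fun m => pv n σ' (l+1) < pv n σ' m

noncomputable def Pp (n l : ℕ) (σ' : Equiv.Perm (Fin n)) : ℕ :=
  if h : (Fset n l σ').Nonempty then (Fset n l σ').max' h else 0

lemma mem_Fset (n l : ℕ) (σ' : Equiv.Perm (Fin n)) (m : ℕ) :
    m ∈ Fset n l σ' ↔ m < l + 1 ∧ pv n σ' (l+1) < pv n σ' m := by
  simp [Fset]

lemma Pp_le (n l : ℕ) (σ' : Equiv.Perm (Fin n)) : Pp n l σ' ≤ l := by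
  unfold Pp
  split_ifs with h
  · have := (Fset n l σ').max'_mem h
    rw [mem_Fset] at this
    omega
  · omega

/-- In the nonempty case: membership in the "front above u1" set is an initial segment. -/
lemma fact1 (n l : ℕ) (σ' : Equiv.Perm (Fin n)) (hσ' : σ' ∈ SdSet n (l+1))
    (hln : l + 2 ≤ n) (hne : (Fset n l σ').Nonempty) (m : ℕ) (hm : m ≤ l) :
    pv n σ' (l+1) < pv n σ' m ↔ m ≤ Pp n l σ' := by
  have hPl := Pp_le n l σ'
  constructor
  · intro h
    have : m ∈ Fset n l σ' := (mem_Fset n l σ' m).2 ⟨by omega, h⟩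
    have := Finset.le_max' _ m this
    rw [Pp, dif_pos hne]
    exact this
  · intro h
    have hp : Pp n l σ' ∈ Fset n l σ' := by
      rw [Pp, dif_pos hne]; exact Finset.max'_mem _ hne
    rw [mem_Fset] at hp
    rcases eq_or_lt_of_le h with h' | h'
    · rw [h']; exact hp.2
    · exact lt_trans hp.2 (pv_mono n l σ' hσ' m (Pp n l σ') h' hPl (by omega))

/-- In the empty case: all front values are below u1. -/
lemma fact2 (n l : ℕ) (σ' : Equiv.Perm (Fin n)) (hln : l + 2 ≤ n)
    (hem : ¬ (Fset n l σ').Nonempty) (m : ℕ) (hm : m ≤ l) :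
    pv n σ' m < pv n σ' (l+1) := by
  rw [Finset.not_nonempty_iff_eq_empty] at hem
  have h1 : ¬ (pv n σ' (l+1) < pv n σ' m) := by
    intro h
    have : m ∈ Fset n l σ' := (mem_Fset n l σ' m).2 ⟨by omega, h⟩
    simp [hem] at this
  have h2 : pv n σ' m ≠ pv n σ' (l+1) := by
    intro h
    have := pv_inj n σ' m (l+1) (by omega) (by omega) h
    omega
  omega

noncomputable def Phi (n l : ℕ) (hln : l + 2 ≤ n) (σ' : Equiv.Perm (Fin n)) :
    Equiv.Perm (Fin n) :=
  σ' * cyc n (Pp n l σ') l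

lemma pv_Phi (n l : ℕ) (hln : l + 2 ≤ n) (σ' : Equiv.Perm (Fin n)) (m : ℕ) (hm : m < n) :
    pv n (Phi n l hln σ') m =
      if m = l then pv n σ' (Pp n l σ')
      else if Pp n l σ' ≤ m ∧ m < l then pv n σ' (m+1)
      else pv n σ' m := by
  have h1 : m = ((⟨m, hm⟩ : Fin n) : ℕ) := rfl
  rw [h1, pv_val]
  rw [show Phi n l hln σ' ⟨m, hm⟩ = σ' (cyc n (Pp n l σ') l ⟨m, hm⟩) from rfl]
  rw [← pv_val n σ']
  rw [cyc_apply n (Pp n l σ') l (Pp_le n l σ') (by omega)]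
  simp only []
  split_ifs <;> rfl

lemma Phi_mem (n l : ℕ) (hln : l + 2 ≤ n) (σ' : Equiv.Perm (Fin n))
    (hσ' : σ' ∈ SdSet n (l+1)) : Phi n l hln σ' ∈ SdSet n l := by
  intro s t hst htl
  have hPl := Pp_le n l σ'
  simp only [Phi, Equiv.Perm.mul_apply]
  have hs := cyc_apply n (Pp n l σ') l (Pp_le n l σ') (by omega) s
  have ht := cyc_apply n (Pp n l σ') l (Pp_le n l σ') (by omega) t
  rw [Fin.lt_def] at hst
  apply hσ'
  · rw [Fin.lt_def, hs, ht]
    split_ifs <;> omega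
  · rw [ht]
    split_ifs <;> omega

lemma Phi_last (n l : ℕ) (hln : l + 2 ≤ n) (σ' : Equiv.Perm (Fin n)) :
    pv n (Phi n l hln σ') (n-1) = pv n σ' (n-1) := by
  rw [pv_Phi n l hln σ' (n-1) (by omega), if_neg (by omega), if_neg (by omega)]

lemma lDesc_Phi_nonempty (n l : ℕ) (hl1 : 1 ≤ l) (hln : l + 2 ≤ n)
    (σ' : Equiv.Perm (Fin n)) (hσ' : σ' ∈ SdSet n (l+1))
    (hne : (Fset n l σ').Nonempty) :
    lDesc n l (Phi n l hln σ') = insert l ((lDesc n (l+1) σ').erase (Pp n l σ')) := by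
  set p := Pp n l σ' with hpdef
  have hPl := Pp_le n l σ'
  have ha : pv n σ' (l+1) < pv n σ' p :=
    (fact1 n l σ' hσ' hln hne p hPl).2 le_rfl
  ext m
  simp only [lDesc, Finset.mem_insert, Finset.mem_erase, Finset.mem_filter, Finset.mem_range]
  by_cases hmn : m < n - 1
  swap
  · constructor
    · rintro ⟨h, -⟩; omega
    · rintro (rfl | ⟨-, h, -⟩) <;> omega
  have hΦl : pv n (Phi n l hln σ') l = pv n σ' p := by
    rw [pv_Phi n l hln σ' l (by omega), if_pos rfl]
  rcases lt_or_ge m p with hmp | hpm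
  · -- m < p : both sides true
    have E1 : pv n (Phi n l hln σ') m = pv n σ' m := by
      rw [pv_Phi n l hln σ' m (by omega), if_neg (by omega), if_neg (by omega)]
    have F1 : pv n σ' p < pv n σ' m := pv_mono n l σ' hσ' m p hmp hPl (by omega)
    have F2 : pv n σ' (l+1) < pv n σ' m := (fact1 n l σ' hσ' hln hne m (by omega)).2 (by omega)
    rw [hΦl, E1]
    omega
  rcases lt_or_ge m l with hml | hlm
  · -- p ≤ m < l : both sides false
    have E1 : pv n (Phi n l hln σ') m = pv n σ' (m+1) := by
      rw [pv_Phi n l hln σ' m (by omega), if_neg (by omega), if_pos ⟨hpm, hml⟩]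
    have F1 : pv n σ' (m+1) < pv n σ' p := pv_mono n l σ' hσ' p (m+1) (by omega) (by omega) (by omega)
    rw [hΦl, E1]
    by_cases hmp : m = p
    · omega
    · have F2 : ¬ (pv n σ' (l+1) < pv n σ' m) := by
        intro h
        have := (fact1 n l σ' hσ' hln hne m (by omega)).1 h
        omega
      omega
  rcases eq_or_lt_of_le hlm with rfl | hml
  · -- m = l : both sides true
    have E2 : pv n (Phi n l hln σ') (l+1) = pv n σ' (l+1) := by
      rw [pv_Phi n l hln σ' (l+1) (by omega), if_neg (by omega), if_neg (by omega)]
    rw [hΦl, E2]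
    omega
  · -- l < m : both reduce to the tail condition
    have E1 : pv n (Phi n l hln σ') m = pv n σ' m := by
      rw [pv_Phi n l hln σ' m (by omega), if_neg (by omega), if_neg (by omega)]
    have E2 : pv n (Phi n l hln σ') (m+1) = pv n σ' (m+1) := by
      rw [pv_Phi n l hln σ' (m+1) (by omega), if_neg (by omega), if_neg (by omega)]
    rw [hΦl, E1, E2]
    omega

lemma lDesc_Phi_empty (n l : ℕ) (hl1 : 1 ≤ l) (hln : l + 2 ≤ n)
    (σ' : Equiv.Perm (Fin n)) (hσ' : σ' ∈ SdSet n (l+1))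
    (hem : ¬ (Fset n l σ').Nonempty) :
    lDesc n l (Phi n l hln σ') = lDesc n (l+1) σ' := by
  have hp0 : Pp n l σ' = 0 := by rw [Pp, dif_neg hem]
  ext m
  simp only [lDesc, Finset.mem_filter, Finset.mem_range]
  by_cases hmn : m < n - 1
  swap
  · constructor <;> (rintro ⟨h, -⟩; omega)
  have hΦl : pv n (Phi n l hln σ') l = pv n σ' 0 := by
    rw [pv_Phi n l hln σ' l (by omega), if_pos rfl, hp0]
  rcases lt_or_ge m l with hml | hlm
  · -- m < l : both sides false
    have E1 : pv n (Phi n l hln σ') m = pv n σ' (m+1) := by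
      rw [pv_Phi n l hln σ' m (by omega), if_neg (by omega), if_pos ⟨by omega, hml⟩]
    have F1 : pv n σ' (m+1) < pv n σ' 0 := pv_mono n l σ' hσ' 0 (m+1) (by omega) (by omega) (by omega)
    have F2 : pv n σ' m < pv n σ' (l+1) := fact2 n l σ' hln hem m (by omega)
    rw [hΦl, E1]
    omega
  rcases eq_or_lt_of_le hlm with rfl | hml
  · -- m = l : both sides false
    have E2 : pv n (Phi n l hln σ') (l+1) = pv n σ' (l+1) := by
      rw [pv_Phi n l hln σ' (l+1) (by omega), if_neg (by omega), if_neg (by omega)]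
    have F2 : pv n σ' 0 < pv n σ' (l+1) := fact2 n l σ' hln hem 0 (by omega)
    have F3 : pv n σ' l < pv n σ' (l+1) := fact2 n l σ' hln hem l le_rfl
    rw [hΦl, E2]
    omega
  · -- l < m
    have E1 : pv n (Phi n l hln σ') m = pv n σ' m := by
      rw [pv_Phi n l hln σ' m (by omega), if_neg (by omega), if_neg (by omega)]
    have E2 : pv n (Phi n l hln σ') (m+1) = pv n σ' (m+1) := by
      rw [pv_Phi n l hln σ' (m+1) (by omega), if_neg (by omega), if_neg (by omega)]
    rw [hΦl, E1, E2]
    have F2 : pv n σ' 0 < pv n σ' (l+1) := fact2 n l σ' hln hem 0 (by omega)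
    omega

lemma card_lDesc_Phi (n l : ℕ) (hl1 : 1 ≤ l) (hln : l + 2 ≤ n)
    (σ' : Equiv.Perm (Fin n)) (hσ' : σ' ∈ SdSet n (l+1)) :
    (lDesc n l (Phi n l hln σ')).card = (lDesc n (l+1) σ').card := by
  by_cases hne : (Fset n l σ').Nonempty
  · rw [lDesc_Phi_nonempty n l hl1 hln σ' hσ' hne]
    have hPl := Pp_le n l σ'
    have ha : pv n σ' (l+1) < pv n σ' (Pp n l σ') :=
      (fact1 n l σ' hσ' hln hne (Pp n l σ') hPl).2 le_rfl
    have hpmem : Pp n l σ' ∈ lDesc n (l+1) σ' := by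
      simp only [lDesc, Finset.mem_filter, Finset.mem_range]
      exact ⟨by omega, Or.inl ⟨by omega, ha⟩⟩
    have hlnot : l ∉ (lDesc n (l+1) σ').erase (Pp n l σ') := by
      intro h
      rw [Finset.mem_erase] at h
      obtain ⟨hne', h⟩ := h
      simp only [lDesc, Finset.mem_filter, Finset.mem_range] at h
      obtain ⟨-, h⟩ := h
      rcases h with ⟨-, h⟩ | ⟨h, -⟩
      · have := (fact1 n l σ' hσ' hln hne l le_rfl).1 h
        omega
      · omega
    rw [Finset.card_insert_of_notMem hlnot, Finset.card_erase_of_mem hpmem]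
    have := Finset.card_pos.2 ⟨_, hpmem⟩
    omega
  · rw [lDesc_Phi_empty n l hl1 hln σ' hσ' hne]

lemma filter_Phi (n l : ℕ) (hl1 : 1 ≤ l) (hln : l + 2 ≤ n)
    (σ' : Equiv.Perm (Fin n)) (hσ' : σ' ∈ SdSet n (l+1)) :
    (Finset.range (l+1)).filter
        (fun m => pv n (Phi n l hln σ') (l+1) < pv n (Phi n l hln σ') m) =
      if (Fset n l σ').Nonempty then insert l (Finset.range (Pp n l σ')) else ∅ := by
  have hPl := Pp_le n l σ'
  have EΦu : pv n (Phi n l hln σ') (l+1) = pv n σ' (l+1) := by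
    rw [pv_Phi n l hln σ' (l+1) (by omega), if_neg (by omega), if_neg (by omega)]
  have hΦl : pv n (Phi n l hln σ') l = pv n σ' (Pp n l σ') := by
    rw [pv_Phi n l hln σ' l (by omega), if_pos rfl]
  ext m
  rw [EΦu]
  simp only [Finset.mem_filter, Finset.mem_range]
  split_ifs with hne
  · have ha : pv n σ' (l+1) < pv n σ' (Pp n l σ') :=
      (fact1 n l σ' hσ' hln hne (Pp n l σ') hPl).2 le_rfl
    simp only [Finset.mem_insert, Finset.mem_range]
    by_cases hml : m = l
    · subst hml
      rw [hΦl]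
      constructor
      · intro _; exact Or.inl rfl
      · intro _; exact ⟨by omega, ha⟩
    · by_cases hmr : m < l
      swap
      · constructor
        · rintro ⟨h, -⟩; omega
        · rintro (h | h) <;> omega
      rcases lt_or_ge m (Pp n l σ') with hmp | hpm
      · have E1 : pv n (Phi n l hln σ') m = pv n σ' m := by
          rw [pv_Phi n l hln σ' m (by omega), if_neg (by omega), if_neg (by omega)]
        rw [E1]
        have := (fact1 n l σ' hσ' hln hne m (by omega)).2 (by omega)
        constructor
        · intro _; exact Or.inr hmp
        · intro _; exact ⟨by omega, this⟩
      · have E1 : pv n (Phi n l hln σ') m = pv n σ' (m+1) := by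
          rw [pv_Phi n l hln σ' m (by omega), if_neg (by omega), if_pos ⟨hpm, hmr⟩]
        rw [E1]
        constructor
        · rintro ⟨-, h⟩
          have := (fact1 n l σ' hσ' hln hne (m+1) (by omega)).1 h
          omega
        · rintro (h | h) <;> omega
  · simp only [Finset.notMem_empty, iff_false]
    rintro ⟨hml, h⟩
    have hp0 : Pp n l σ' = 0 := by rw [Pp, dif_neg hne]
    by_cases hmr : m = l
    · rw [hmr, hΦl, hp0] at h
      have := fact2 n l σ' hln hne 0 (by omega)
      omega
    · have E1 : pv n (Phi n l hln σ') m = pv n σ' (m+1) := by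
        rw [pv_Phi n l hln σ' m (by omega), if_neg (by omega), if_pos ⟨by omega, by omega⟩]
      rw [E1] at h
      have := fact2 n l σ' hln hne (m+1) (by omega)
      omega

lemma Phi_inj (n l : ℕ) (hl1 : 1 ≤ l) (hln : l + 2 ≤ n)
    (σ1 σ2 : Equiv.Perm (Fin n)) (h1 : σ1 ∈ SdSet n (l+1)) (h2 : σ2 ∈ SdSet n (l+1))
    (h : Phi n l hln σ1 = Phi n l hln σ2) : σ1 = σ2 := by
  have hf := filter_Phi n l hl1 hln σ1 h1
  rw [h, filter_Phi n l hl1 hln σ2 h2] at hf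
  have hP1 := Pp_le n l σ1
  have hP2 := Pp_le n l σ2
  have hp : Pp n l σ1 = Pp n l σ2 := by
    by_cases e1 : (Fset n l σ1).Nonempty <;> by_cases e2 : (Fset n l σ2).Nonempty
    · rw [if_pos e1, if_pos e2] at hf
      have c1 : l ∉ Finset.range (Pp n l σ1) := by
        intro hc; rw [Finset.mem_range] at hc; omega
      have c2 : l ∉ Finset.range (Pp n l σ2) := by
        intro hc; rw [Finset.mem_range] at hc; omega
      have := congrArg Finset.card hf
      rw [Finset.card_insert_of_notMem c1, Finset.card_insert_of_notMem c2,
        Finset.card_range, Finset.card_range] at this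
      omega
    · rw [if_pos e1, if_neg e2] at hf
      exact absurd hf.symm (Finset.insert_ne_empty _ _)
    · rw [if_neg e1, if_pos e2] at hf
      exact absurd hf (Finset.insert_ne_empty _ _)
    · rw [Pp, dif_neg e1, Pp, dif_neg e2]
  have hc : σ1 * cyc n (Pp n l σ1) l = σ2 * cyc n (Pp n l σ2) l := h
  rw [hp] at hc
  exact mul_right_cancel hc

/-- Monotonicity in `l`: `A(d+1, i, d+1-j, l+1) ≤ A(d+1, i, d+1-j, l)`. -/
theorem Acard_mono (d l i j : ℕ) (hl : 1 ≤ l) (hld : l ≤ d - 1)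
    (hi : i ≤ d) (hj : j ≤ d) :
    Acard (d + 1) i (d + 1 - j) (l + 1) ≤ Acard (d + 1) i (d + 1 - j) l := by
  have hln : l + 2 ≤ d + 1 := by omega
  unfold Acard
  exact Nat.card_le_card_of_injective
    (fun σ => ⟨Phi (d+1) l hln σ.1,
      Phi_mem (d+1) l hln σ.1 σ.2.1,
      by rw [card_lDesc_Phi (d+1) l hl hln σ.1 σ.2.1]; exact σ.2.2.1,
      by rw [Phi_last (d+1) l hln σ.1]; exact σ.2.2.2⟩)
    (fun a b hab => Subtype.ext
      (Phi_inj (d+1) l hl hln a.1 b.1 a.2.1 b.2.1 (congrArg Subtype.val hab)))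
end
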